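/- For every $n\in\mathbb N$, the restriction map $r_n|_{D_n}$ is injective, $r_n(D_n)=r_n(M_{n+1})=f(s_{n+1}B_{\ell_\infty(\Gamma_n)})$, and the inverse map $(r_n|_{D_n})^{-1}:f(s_{n+1}B_{\ell_\infty(\Gamma_n)})\to D_n$ is $(\lambda^2+2\lambda+2)$-Lipschitz. -/

import Mathlib

open Set

noncomputable section

variable {Γ : Type*} [TopologicalSpace Γ] [DiscreteTopology Γ]

/-- `ℓ∞(Γ)`: the Banach space of bounded real functions on `Γ`
(carrying the discrete topology, so that boundedness is the only constraint). -/
abbrev Linf (Γ : Type*) [TopologicalSpace Γ] [DiscreteTopology Γ] : Type _ :=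
  BoundedContinuousFunction Γ ℝ

/-- The entire part of a real number, toward `0`: `[r] = sign(r)⌊|r|⌋`. -/
def ent (r : ℝ) : ℝ := Real.sign r * ⌊|r|⌋

lemma abs_ent_le (r : ℝ) : |ent r| ≤ |r| := by
  have hsign : |Real.sign r| ≤ 1 := by
    rcases lt_trichotomy r 0 with h | h | h
    · rw [Real.sign_of_neg h]; norm_num
    · rw [h, Real.sign_zero]; norm_num
    · rw [Real.sign_of_pos h]; norm_num
  have hfl : |(⌊|r|⌋ : ℝ)| ≤ |r| := by
    rw [abs_of_nonneg (by exact_mod_cast Int.floor_nonneg.mpr (abs_nonneg r))]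
    exact Int.floor_le _
  calc |ent r| = |Real.sign r| * |(⌊|r|⌋ : ℝ)| := abs_mul _ _
    _ ≤ 1 * |r| := mul_le_mul hsign hfl (abs_nonneg _) zero_le_one
    _ = |r| := one_mul _

/-- The coordinatewise quantization `f : ℓ∞(S) → ℓ∞(S)`, `f(x)(γ) = [x(γ)]`. -/
def quant (x : Linf Γ) : Linf Γ :=
  BoundedContinuousFunction.ofNormedAddCommGroup (fun γ => ent (x γ))
    continuous_of_discreteTopology ‖x‖ (fun γ => by
      rw [Real.norm_eq_abs]
      exact (abs_ent_le (x γ)).trans (by simpa using x.norm_coe_le_norm γ))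

/-- Scalar truncation at level `s`. -/
def truncFun (s t : ℝ) : ℝ := if |t| ≤ s then t else s * t / |t|

lemma abs_truncFun_le (s t : ℝ) : |truncFun s t| ≤ max |s| |t| := by
  unfold truncFun
  split_ifs with h
  · exact le_max_right _ _
  · by_cases ht : t = 0
    · simp [ht]
    · have hst : abs (s * t / |t|) = |s| := by
        rw [abs_div, abs_mul, abs_abs, mul_div_assoc, div_self (abs_ne_zero.mpr ht), mul_one]
      rw [hst]; exact le_max_left _ _

/-- The truncation of radius `s`: `T_s(x)(γ) = x(γ)` if `|x(γ)| ≤ s`,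
and `= s·x(γ)/|x(γ)|` otherwise. -/
def trunc (s : ℝ) (x : Linf Γ) : Linf Γ :=
  BoundedContinuousFunction.ofNormedAddCommGroup (fun γ => truncFun s (x γ))
    continuous_of_discreteTopology (max |s| ‖x‖) (fun γ => by
      rw [Real.norm_eq_abs]
      exact (abs_truncFun_le s (x γ)).trans
        (max_le_max le_rfl (by simpa using x.norm_coe_le_norm γ)))

/-- The restriction operator `r_S : ℓ∞(Γ) → ℓ∞(S)`, where `ℓ∞(S)` is identified
isometrically with the subspace of `ℓ∞(Γ)` of functions vanishing off `S`. -/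
def restr (S : Set Γ) (x : Linf Γ) : Linf Γ :=
  BoundedContinuousFunction.ofNormedAddCommGroup (S.indicator x)
    continuous_of_discreteTopology ‖x‖ (fun γ => by
      rw [Real.norm_eq_abs]
      by_cases h : γ ∈ S
      · rw [Set.indicator_of_mem h]
        simpa using x.norm_coe_le_norm γ
      · rw [Set.indicator_of_notMem h]
        simp)

/-- The ball `s·B_{ℓ∞(S)}`, viewed inside `ℓ∞(Γ)`: functions supported on `S`
of norm at most `s`. -/
def suppBall (S : Set Γ) (s : ℝ) : Set (Linf Γ) :=
  {x | (∀ γ ∉ S, x γ = 0) ∧ ‖x‖ ≤ s}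

/-- `chain T a b = T (a+1) ∘ ⋯ ∘ T b` (the identity if `b ≤ a`). -/
def chain {α : Type*} (T : ℕ → α → α) (a b : ℕ) : α → α :=
  Nat.rec id (fun k ih => ih ∘ T (a + k + 1)) (b - a)

/-- Bourgain–Delbaen data on `Γ`: a strictly increasing sequence of nonempty finite
sets `Γs n` (for `n ≥ 1`) with union `Γ`, together with compatible bounded linear
extension operators `i n : ℓ∞(Γ_n) → ℓ∞(Γ)` (realized as operators on `ℓ∞(Γ)`
factoring through the restriction `restr (Γs n)`), with norms bounded by the
positive integer `lam`. -/
structure BD (Γ : Type*) [TopologicalSpace Γ] [DiscreteTopology Γ] where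
  Γs : ℕ → Set Γ
  lam : ℕ
  i : ℕ → Linf Γ →L[ℝ] Linf Γ
  one_le_lam : 1 ≤ lam
  finite : ∀ n, 1 ≤ n → (Γs n).Finite
  nonempty : ∀ n, 1 ≤ n → (Γs n).Nonempty
  ssubset : ∀ n, 1 ≤ n → Γs n ⊂ Γs (n + 1)
  iUnion_eq : ⋃ n ∈ {k : ℕ | 1 ≤ k}, Γs n = Set.univ
  extension : ∀ n, 1 ≤ n → ∀ x : Linf Γ, ∀ γ ∈ Γs n, i n x γ = x γ
  factor : ∀ n, 1 ≤ n → ∀ x : Linf Γ, i n (restr (Γs n) x) = i n x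
  compatible : ∀ n m, 1 ≤ n → n < m → ∀ x : Linf Γ, i m (restr (Γs m) (i n x)) = i n x
  norm_i_le : ∀ n, 1 ≤ n → ‖i n‖ ≤ (lam : ℝ)

namespace BD

/-- `s n = λ^n`. -/
def s (B : BD Γ) (n : ℕ) : ℝ := (B.lam : ℝ) ^ n

/-- The sets `M_n` (with `M_0 = ∅`):
`M_n = M_{n-1} ∪ (f ∘ i_n)(f(s_n B_{ℓ∞(Γ_n)}) \ r_n(M_{n-1}))`. -/
def M (B : BD Γ) : ℕ → Set (Linf Γ)
  | 0 => ∅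
  | n + 1 =>
      M B n ∪
        (fun z => quant (B.i (n + 1) z)) ''
          (quant '' suppBall (B.Γs (n + 1)) (B.s (n + 1)) \ restr (B.Γs (n + 1)) '' M B n)

/-- `M = ⋃ n, M_n`. -/
def Mtot (B : BD Γ) : Set (Linf Γ) := ⋃ n, B.M n

/-- `C_n = (f ∘ i_{n+1} ∘ f ∘ T_{s_{n+1}} ∘ r_{n+1} ∘ i_n)
(f(s_{n+1}B_{ℓ∞(Γ_n)}) \ f(s_n B_{ℓ∞(Γ_n)}))`. -/
def C (B : BD Γ) (n : ℕ) : Set (Linf Γ) :=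
  (fun z => quant (B.i (n + 1) (quant (trunc (B.s (n + 1)) (restr (B.Γs (n + 1)) (B.i n z)))))) ''
    (quant '' suppBall (B.Γs n) (B.s (n + 1)) \ quant '' suppBall (B.Γs n) (B.s n))

/-- `D_n = M_n ∪ C_n`. -/
def D (B : BD Γ) (n : ℕ) : Set (Linf Γ) := B.M n ∪ B.C n

end BD

/-!
Both `M_{n+1}` and `D_n = M_n ∪ C_n` have the shape `A ∪ φ '' (L \ r '' A)`, where the restriction
`r` is injective on `A`, `r '' A ⊆ L`, and `φ` is a right inverse of `r` on the lattice ball `L`;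
such a set is mapped by `r` bijectively onto `L`.

For the Lipschitz bound, every `x ∈ D_n` lies within `λ + 1` of `G (r_n x)`, where
`G = i_{n+1} ∘ T_{s_{n+1}} ∘ r_{n+1} ∘ i_n` is `λ²`-Lipschitz because truncation is a contraction.
Distinct integer-valued points are at distance at least `1`, so
`‖x - y‖ ≤ 2 (λ + 1) + λ² ‖r_n x - r_n y‖ ≤ (λ² + 2λ + 2) ‖r_n x - r_n y‖`.
-/

section GreedyExtension

variable {α β : Type*} {g : α → β} {φ : β → α} {A : Set α} {L : Set β}

theorem injOn_union_image_sdiff (hA : InjOn g A) (hφ : LeftInvOn g φ L) :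
    InjOn g (A ∪ φ '' (L \ g '' A)) := by
  have hφ' : LeftInvOn g φ (L \ g '' A) := hφ.mono sdiff_subset
  refine (injOn_union ?_).2 ⟨hA, LeftInvOn.injOn hφ'.rightInvOn_image, ?_⟩
  · refine disjoint_left.2 fun a ha ⟨z, hz, hza⟩ => hz.2 ⟨a, ha, ?_⟩
    rw [← hza, hφ' hz]
  · rintro a ha _ ⟨z, hz, rfl⟩ hgz
    exact hz.2 ⟨a, ha, hgz.trans (hφ' hz)⟩

theorem image_union_image_sdiff (hφ : LeftInvOn g φ L) (hAL : g '' A ⊆ L) :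
    g '' (A ∪ φ '' (L \ g '' A)) = L := by
  rw [image_union, (hφ.mono sdiff_subset).image_image, union_sdiff_cancel hAL]

end GreedyExtension

lemma ent_intCast (k : ℤ) : ent k = k := by
  rw [ent, Real.sign_intCast, ← Int.cast_abs, Int.floor_intCast, ← Int.cast_mul, Int.sign_mul_abs]

lemma exists_ent_eq_intCast (r : ℝ) : ∃ k : ℤ, ent r = k := by
  rcases Real.sign_apply_eq r with h | h | h
  · exact ⟨-⌊|r|⌋, by rw [ent, h]; push_cast; ring⟩
  · exact ⟨0, by rw [ent, h]; simp⟩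
  · exact ⟨⌊|r|⌋, by rw [ent, h]; ring⟩

lemma abs_ent_sub_self_le (r : ℝ) : |ent r - r| ≤ 1 := by
  have hfloor : abs ((⌊|r|⌋ : ℝ) - |r|) ≤ 1 := by
    rw [abs_sub_comm, Int.self_sub_floor, abs_of_nonneg (Int.fract_nonneg _)]
    exact (Int.fract_lt_one _).le
  rcases lt_trichotomy r 0 with h | rfl | h
  · rw [ent, Real.sign_of_neg h]
    rw [abs_of_neg h] at hfloor ⊢
    rwa [show -1 * (⌊-r⌋ : ℝ) - r = -(⌊-r⌋ - -r) by ring, abs_neg]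
  · simp [ent]
  · rw [abs_of_pos h] at hfloor
    rwa [ent, Real.sign_of_pos h, one_mul, abs_of_pos h]

lemma truncFun_eq_projIcc {s : ℝ} (hs : 0 ≤ s) (t : ℝ) :
    truncFun s t = projIcc (-s) s (by linarith) t := by
  rw [coe_projIcc, truncFun]
  split_ifs with h
  · rw [abs_le] at h
    rw [min_eq_right h.2, max_eq_right h.1]
  · rcases lt_or_ge t 0 with ht | ht
    · rw [abs_of_neg ht] at h ⊢
      rw [min_eq_right (by linarith), max_eq_left (by linarith), div_neg, mul_div_assoc,
        div_self ht.ne, mul_one]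
    · rw [abs_of_nonneg ht] at h ⊢
      rw [min_eq_left (not_le.1 h).le, max_eq_right (by linarith), mul_div_assoc,
        div_self (by linarith), mul_one]

lemma truncFun_of_abs_le {s t : ℝ} (h : |t| ≤ s) : truncFun s t = t := if_pos h

lemma abs_truncFun_sub_truncFun_le {s : ℝ} (hs : 0 ≤ s) (a b : ℝ) :
    |truncFun s a - truncFun s b| ≤ |a - b| := by
  rw [truncFun_eq_projIcc hs, truncFun_eq_projIcc hs]
  exact abs_projIcc_sub_projIcc _

def IsIntValued (x : Linf Γ) : Prop := ∀ γ, ∃ k : ℤ, x γ = k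

@[simp] lemma quant_apply (x : Linf Γ) (γ : Γ) : quant x γ = ent (x γ) := rfl

@[simp] lemma trunc_apply (s : ℝ) (x : Linf Γ) (γ : Γ) : trunc s x γ = truncFun s (x γ) := rfl

lemma restr_apply_of_mem {S : Set Γ} (x : Linf Γ) {γ : Γ} (h : γ ∈ S) : restr S x γ = x γ :=
  indicator_of_mem h _

lemma restr_apply_of_notMem {S : Set Γ} (x : Linf Γ) {γ : Γ} (h : γ ∉ S) : restr S x γ = 0 :=
  indicator_of_notMem h _

lemma abs_apply_le_norm (x : Linf Γ) (γ : Γ) : |x γ| ≤ ‖x‖ := by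
  simpa using x.norm_coe_le_norm γ

lemma norm_le_iff_abs_apply_le {s : ℝ} (hs : 0 ≤ s) {x : Linf Γ} : ‖x‖ ≤ s ↔ ∀ γ, |x γ| ≤ s := by
  simp [BoundedContinuousFunction.norm_le hs, Real.norm_eq_abs]

lemma isIntValued_quant (x : Linf Γ) : IsIntValued (quant x) :=
  fun γ => exists_ent_eq_intCast (x γ)

lemma IsIntValued.quant_eq {x : Linf Γ} (h : IsIntValued x) : quant x = x := by
  ext γ
  obtain ⟨k, hk⟩ := h γ
  rw [quant_apply, hk, ent_intCast]

lemma IsIntValued.restr {x : Linf Γ} (h : IsIntValued x) (S : Set Γ) : IsIntValued (restr S x) := by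
  intro γ
  by_cases hγ : γ ∈ S
  · rw [restr_apply_of_mem _ hγ]; exact h γ
  · exact ⟨0, by rw [restr_apply_of_notMem _ hγ]; simp⟩

lemma norm_quant_le (x : Linf Γ) : ‖quant x‖ ≤ ‖x‖ :=
  (norm_le_iff_abs_apply_le (norm_nonneg x)).2 fun γ =>
    (abs_ent_le _).trans (abs_apply_le_norm x γ)

lemma norm_quant_sub_self_le (x : Linf Γ) : ‖quant x - x‖ ≤ 1 :=
  (norm_le_iff_abs_apply_le zero_le_one).2 fun γ => by simpa using abs_ent_sub_self_le (x γ)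

lemma restr_sub (S : Set Γ) (x y : Linf Γ) : restr S (x - y) = restr S x - restr S y := by
  ext γ
  by_cases h : γ ∈ S
  · simp [restr_apply_of_mem _ h]
  · simp [restr_apply_of_notMem _ h]

lemma restr_quant (S : Set Γ) (x : Linf Γ) : restr S (quant x) = quant (restr S x) := by
  ext γ
  by_cases h : γ ∈ S
  · simp [restr_apply_of_mem _ h]
  · simp [restr_apply_of_notMem _ h, ent]

lemma restr_restr {S T : Set Γ} (h : S ⊆ T) (x : Linf Γ) : restr S (restr T x) = restr S x := by
  ext γ
  by_cases hγ : γ ∈ S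
  · rw [restr_apply_of_mem _ hγ, restr_apply_of_mem _ hγ, restr_apply_of_mem _ (h hγ)]
  · rw [restr_apply_of_notMem _ hγ, restr_apply_of_notMem _ hγ]

lemma restr_eq_self {S : Set Γ} {x : Linf Γ} (h : ∀ γ ∉ S, x γ = 0) : restr S x = x := by
  ext γ
  by_cases hγ : γ ∈ S
  · exact restr_apply_of_mem _ hγ
  · rw [restr_apply_of_notMem _ hγ, h γ hγ]

lemma norm_restr_le (S : Set Γ) (x : Linf Γ) : ‖restr S x‖ ≤ ‖x‖ := by
  refine (norm_le_iff_abs_apply_le (norm_nonneg x)).2 fun γ => ?_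
  by_cases h : γ ∈ S
  · rw [restr_apply_of_mem _ h]; exact abs_apply_le_norm x γ
  · rw [restr_apply_of_notMem _ h, abs_zero]; exact norm_nonneg x

lemma norm_restr_sub_restr_le (S : Set Γ) (x y : Linf Γ) :
    ‖restr S x - restr S y‖ ≤ ‖x - y‖ := by
  rw [← restr_sub]; exact norm_restr_le S _

lemma trunc_eq_self {s : ℝ} {x : Linf Γ} (h : ‖x‖ ≤ s) : trunc s x = x := by
  ext γ
  rw [trunc_apply, truncFun_of_abs_le ((abs_apply_le_norm x γ).trans h)]

lemma norm_trunc_sub_trunc_le {s : ℝ} (hs : 0 ≤ s) (x y : Linf Γ) :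
    ‖trunc s x - trunc s y‖ ≤ ‖x - y‖ :=
  (norm_le_iff_abs_apply_le (norm_nonneg _)).2 fun γ => by
    simpa using (abs_truncFun_sub_truncFun_le hs (x γ) (y γ)).trans
      (abs_apply_le_norm (x - y) γ)

lemma mem_quant_suppBall {S : Set Γ} {s : ℝ} {x : Linf Γ} :
    x ∈ quant '' suppBall S s ↔ IsIntValued x ∧ (∀ γ ∉ S, x γ = 0) ∧ ‖x‖ ≤ s := by
  constructor
  · rintro ⟨y, ⟨hy0, hys⟩, rfl⟩
    refine ⟨isIntValued_quant y, fun γ hγ => ?_, (norm_quant_le y).trans hys⟩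
    simp [hy0 γ hγ, ent]
  · rintro ⟨hint, hsupp, hnorm⟩
    exact ⟨x, ⟨hsupp, hnorm⟩, hint.quant_eq⟩

lemma quant_suppBall_mono {S : Set Γ} {s t : ℝ} (h : s ≤ t) :
    quant '' suppBall S s ⊆ quant '' suppBall S t := by
  simp only [subset_def, mem_quant_suppBall]
  exact fun x ⟨hint, hsupp, hnorm⟩ => ⟨hint, hsupp, hnorm.trans h⟩

lemma restr_image_quant_suppBall {S T : Set Γ} (h : S ⊆ T) (s : ℝ) :
    restr S '' (quant '' suppBall T s) = quant '' suppBall S s := by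
  ext z
  constructor
  · rintro ⟨w, hw, rfl⟩
    obtain ⟨hint, -, hnorm⟩ := mem_quant_suppBall.1 hw
    exact mem_quant_suppBall.2
      ⟨hint.restr S, fun γ hγ => restr_apply_of_notMem _ hγ, (norm_restr_le _ _).trans hnorm⟩
  · intro hz
    obtain ⟨hint, hsupp, hnorm⟩ := mem_quant_suppBall.1 hz
    exact ⟨z, mem_quant_suppBall.2 ⟨hint, fun γ hγ => hsupp γ (fun hS => hγ (h hS)), hnorm⟩,
      restr_eq_self hsupp⟩

lemma one_le_norm_sub {x y : Linf Γ} (hx : IsIntValued x) (hy : IsIntValued y) (hne : x ≠ y) :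
    1 ≤ ‖x - y‖ := by
  obtain ⟨γ, hγ⟩ : ∃ γ, x γ ≠ y γ := by
    by_contra! h
    exact hne (BoundedContinuousFunction.ext h)
  obtain ⟨k, hk⟩ := hx γ
  obtain ⟨l, hl⟩ := hy γ
  have hkl : k ≠ l := fun h => hγ (by rw [hk, hl, h])
  calc (1 : ℝ) ≤ |((k - l : ℤ) : ℝ)| := by exact_mod_cast Int.one_le_abs (sub_ne_zero.2 hkl)
    _ = |(x - y) γ| := by simp [hk, hl]
    _ ≤ ‖x - y‖ := abs_apply_le_norm _ _

lemma norm_quant_map_quant_sub_le (T : Linf Γ →L[ℝ] Linf Γ) (a : Linf Γ) :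
    ‖quant (T (quant a)) - T a‖ ≤ 1 + ‖T‖ := by
  have hsplit :
      quant (T (quant a)) - T a = (quant (T (quant a)) - T (quant a)) + T (quant a - a) := by
    rw [map_sub]; abel
  calc ‖quant (T (quant a)) - T a‖
      ≤ ‖quant (T (quant a)) - T (quant a)‖ + ‖T‖ * ‖quant a - a‖ := by
        rw [hsplit]; exact (norm_add_le _ _).trans (add_le_add le_rfl (T.le_opNorm _))
    _ ≤ 1 + ‖T‖ * 1 := by
        gcongr
        exacts [norm_quant_sub_self_le _, norm_quant_sub_self_le _]
    _ = 1 + ‖T‖ := by rw [mul_one]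

lemma norm_quant_sub_map_quant_le (P : Linf Γ →L[ℝ] Linf Γ) {w : Linf Γ} (hw : P w = w) :
    ‖quant w - P (quant w)‖ ≤ 1 + ‖P‖ := by
  have hsplit : quant w - P (quant w) = (quant w - w) - P (quant w - w) := by
    rw [map_sub, hw]; abel
  calc ‖quant w - P (quant w)‖ ≤ ‖quant w - w‖ + ‖P‖ * ‖quant w - w‖ := by
        rw [hsplit]; exact (norm_sub_le _ _).trans (add_le_add le_rfl (P.le_opNorm _))
    _ ≤ 1 + ‖P‖ * 1 := by
        gcongr
        exacts [norm_quant_sub_self_le _, norm_quant_sub_self_le _]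
    _ = 1 + ‖P‖ := by rw [mul_one]

namespace BD

variable (B : BD Γ)

def truncExt (n : ℕ) (u : Linf Γ) : Linf Γ :=
  trunc (B.s (n + 1)) (restr (B.Γs (n + 1)) (B.i n u))

def cMap (n : ℕ) (u : Linf Γ) : Linf Γ := quant (B.i (n + 1) (quant (B.truncExt n u)))

lemma one_le_lam_real : (1 : ℝ) ≤ B.lam := by exact_mod_cast B.one_le_lam

lemma s_succ (n : ℕ) : B.s (n + 1) = B.lam * B.s n := by
  rw [s, s, pow_succ, mul_comm]

lemma s_nonneg (n : ℕ) : 0 ≤ B.s n := pow_nonneg (by linarith [B.one_le_lam_real]) n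

lemma s_mono {k m : ℕ} (h : k ≤ m) : B.s k ≤ B.s m := pow_le_pow_right₀ B.one_le_lam_real h

lemma Γs_subset_succ {n : ℕ} (hn : 1 ≤ n) : B.Γs n ⊆ B.Γs (n + 1) := (B.ssubset n hn).subset

lemma norm_i_apply_le {n : ℕ} (hn : 1 ≤ n) (x : Linf Γ) : ‖B.i n x‖ ≤ B.lam * ‖x‖ :=
  (B.i n).le_of_opNorm_le (B.norm_i_le n hn) x

lemma restr_i {n : ℕ} (hn : 1 ≤ n) (x : Linf Γ) : restr (B.Γs n) (B.i n x) = restr (B.Γs n) x := by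
  ext γ
  by_cases hγ : γ ∈ B.Γs n
  · rw [restr_apply_of_mem _ hγ, restr_apply_of_mem _ hγ, B.extension n hn x γ hγ]
  · rw [restr_apply_of_notMem _ hγ, restr_apply_of_notMem _ hγ]

lemma i_i_of_le {k m : ℕ} (hk : 1 ≤ k) (hkm : k ≤ m) (x : Linf Γ) : B.i m (B.i k x) = B.i k x := by
  rcases hkm.lt_or_eq with hkm | rfl
  · rw [← B.factor m (by omega), B.compatible k m hk hkm]
  · rw [← B.factor k hk, B.restr_i hk, B.factor k hk]

lemma leftInvOn_restr_quant_i {m : ℕ} (hm : 1 ≤ m) (s : ℝ) :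
    LeftInvOn (restr (B.Γs m)) (fun z => quant (B.i m z)) (quant '' suppBall (B.Γs m) s) := by
  intro z hz
  obtain ⟨hint, hsupp, -⟩ := mem_quant_suppBall.1 hz
  dsimp only
  rw [restr_quant, B.restr_i hm, restr_eq_self hsupp, hint.quant_eq]

lemma exists_eq_quant_i_of_mem_M {n : ℕ} {x : Linf Γ} (hx : x ∈ B.M n) :
    ∃ k z, 1 ≤ k ∧ k ≤ n ∧ ‖z‖ ≤ B.s k ∧ x = quant (B.i k z) := by
  induction n with
  | zero => exact absurd hx (notMem_empty x)
  | succ n ih =>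
    rcases hx with hx | ⟨z, hz, rfl⟩
    · obtain ⟨k, z, hk, hkn, h⟩ := ih hx
      exact ⟨k, z, hk, hkn.trans n.le_succ, h⟩
    · exact ⟨n + 1, z, by omega, le_rfl, (mem_quant_suppBall.1 hz.1).2.2, rfl⟩

lemma norm_le_of_mem_M {n : ℕ} {x : Linf Γ} (hx : x ∈ B.M n) : ‖x‖ ≤ B.s (n + 1) := by
  obtain ⟨k, z, hk, hkn, hz, rfl⟩ := B.exists_eq_quant_i_of_mem_M hx
  calc ‖quant (B.i k z)‖ ≤ ‖B.i k z‖ := norm_quant_le _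
    _ ≤ B.lam * ‖z‖ := B.norm_i_apply_le hk _
    _ ≤ B.lam * B.s k := by gcongr
    _ = B.s (k + 1) := (B.s_succ k).symm
    _ ≤ B.s (n + 1) := B.s_mono (by omega)

lemma restr_succ_image_M_subset (n : ℕ) :
    restr (B.Γs (n + 1)) '' B.M n ⊆ quant '' suppBall (B.Γs (n + 1)) (B.s (n + 1)) := by
  rintro _ ⟨x, hx, rfl⟩
  obtain ⟨k, z, -, -, -, rfl⟩ := B.exists_eq_quant_i_of_mem_M hx
  exact mem_quant_suppBall.2 ⟨(isIntValued_quant _).restr _,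
    fun γ hγ => restr_apply_of_notMem _ hγ, (norm_restr_le _ _).trans (B.norm_le_of_mem_M hx)⟩

lemma injOn_restr_M (n : ℕ) : InjOn (restr (B.Γs n)) (B.M n) := by
  induction n with
  | zero => simp [M]
  | succ n ih =>
    refine injOn_union_image_sdiff ?_ (B.leftInvOn_restr_quant_i (by omega) _)
    rcases Nat.eq_zero_or_pos n with rfl | hn
    · simp [M]
    · refine InjOn.of_comp (g := restr (B.Γs n)) ?_
      exact ih.congr fun x _ => (restr_restr (B.Γs_subset_succ hn) x).symm

lemma restr_succ_image_M_succ (n : ℕ) :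
    restr (B.Γs (n + 1)) '' B.M (n + 1) = quant '' suppBall (B.Γs (n + 1)) (B.s (n + 1)) :=
  image_union_image_sdiff (B.leftInvOn_restr_quant_i (by omega) _) (B.restr_succ_image_M_subset n)

lemma restr_image_M {n : ℕ} (hn : 1 ≤ n) :
    restr (B.Γs n) '' B.M n = quant '' suppBall (B.Γs n) (B.s n) := by
  obtain ⟨m, rfl⟩ : ∃ m, n = m + 1 := ⟨n - 1, by omega⟩
  exact B.restr_succ_image_M_succ m

lemma restr_image_M_succ {n : ℕ} (hn : 1 ≤ n) :
    restr (B.Γs n) '' B.M (n + 1) = quant '' suppBall (B.Γs n) (B.s (n + 1)) := by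
  rw [← restr_image_quant_suppBall (B.Γs_subset_succ hn), ← B.restr_succ_image_M_succ, image_image]
  exact image_congr fun x _ => (restr_restr (B.Γs_subset_succ hn) x).symm

lemma leftInvOn_restr_cMap {n : ℕ} (hn : 1 ≤ n) :
    LeftInvOn (restr (B.Γs n)) (B.cMap n) (quant '' suppBall (B.Γs n) (B.s (n + 1))) := by
  intro z hz
  obtain ⟨hint, hsupp, hnorm⟩ := mem_quant_suppBall.1 hz
  have hsub := B.Γs_subset_succ hn
  ext γ
  by_cases hγ : γ ∈ B.Γs n
  · obtain ⟨k, hk⟩ := hint γ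
    have hzγ : |z γ| ≤ B.s (n + 1) := (abs_apply_le_norm z γ).trans hnorm
    rw [restr_apply_of_mem _ hγ, cMap, quant_apply, B.extension (n + 1) (by omega) _ γ (hsub hγ),
      quant_apply, truncExt, trunc_apply, restr_apply_of_mem _ (hsub hγ),
      B.extension n hn z γ hγ, truncFun_of_abs_le hzγ, hk, ent_intCast, ent_intCast]
  · rw [restr_apply_of_notMem _ hγ, hsupp γ hγ]

lemma D_eq_union {n : ℕ} (hn : 1 ≤ n) :
    B.D n = B.M n ∪ B.cMap n ''
      (quant '' suppBall (B.Γs n) (B.s (n + 1)) \ restr (B.Γs n) '' B.M n) := by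
  rw [B.restr_image_M hn]; rfl

lemma injOn_restr_D {n : ℕ} (hn : 1 ≤ n) : InjOn (restr (B.Γs n)) (B.D n) := by
  rw [B.D_eq_union hn]
  exact injOn_union_image_sdiff (B.injOn_restr_M n) (B.leftInvOn_restr_cMap hn)

lemma restr_image_D {n : ℕ} (hn : 1 ≤ n) :
    restr (B.Γs n) '' B.D n = quant '' suppBall (B.Γs n) (B.s (n + 1)) := by
  rw [B.D_eq_union hn]
  refine image_union_image_sdiff (B.leftInvOn_restr_cMap hn) ?_
  rw [B.restr_image_M hn]
  exact quant_suppBall_mono (B.s_mono n.le_succ)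

lemma norm_i_truncExt_sub_le {n : ℕ} (hn : 1 ≤ n) (u v : Linf Γ) :
    ‖B.i (n + 1) (B.truncExt n u) - B.i (n + 1) (B.truncExt n v)‖ ≤ (B.lam : ℝ) ^ 2 * ‖u - v‖ :=
  calc ‖B.i (n + 1) (B.truncExt n u) - B.i (n + 1) (B.truncExt n v)‖
      ≤ B.lam * ‖B.truncExt n u - B.truncExt n v‖ := by
        rw [← map_sub]; exact B.norm_i_apply_le (by omega) _
    _ ≤ B.lam * ‖B.i n u - B.i n v‖ := by
        gcongr
        exact (norm_trunc_sub_trunc_le (B.s_nonneg _) _ _).trans (norm_restr_sub_restr_le _ _ _)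
    _ ≤ B.lam * (B.lam * ‖u - v‖) := by
        gcongr
        rw [← map_sub]; exact B.norm_i_apply_le hn _
    _ = (B.lam : ℝ) ^ 2 * ‖u - v‖ := by ring

/-- Here `‖i_n u‖ ≤ λ s_n = s_{n+1}`, so the truncation does nothing. -/
lemma i_truncExt_of_norm_le {n : ℕ} (hn : 1 ≤ n) {u : Linf Γ} (hu : ‖u‖ ≤ B.s n) :
    B.i (n + 1) (B.truncExt n u) = B.i n u := by
  have hnorm : ‖restr (B.Γs (n + 1)) (B.i n u)‖ ≤ B.s (n + 1) :=
    calc ‖restr (B.Γs (n + 1)) (B.i n u)‖ ≤ ‖B.i n u‖ := norm_restr_le _ _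
      _ ≤ B.lam * ‖u‖ := B.norm_i_apply_le hn u
      _ ≤ B.lam * B.s n := by gcongr
      _ = B.s (n + 1) := (B.s_succ n).symm
  rw [truncExt, trunc_eq_self hnorm, B.factor (n + 1) (by omega), B.i_i_of_le hn n.le_succ]

lemma norm_sub_i_truncExt_le {n : ℕ} (hn : 1 ≤ n) {x : Linf Γ} (hx : x ∈ B.D n) :
    ‖x - B.i (n + 1) (B.truncExt n (restr (B.Γs n) x))‖ ≤ B.lam + 1 := by
  rw [B.D_eq_union hn] at hx
  rcases hx with hx | ⟨u, hu, rfl⟩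
  · have hu : ‖restr (B.Γs n) x‖ ≤ B.s n := by
      have := mem_image_of_mem (restr (B.Γs n)) hx
      rw [B.restr_image_M hn] at this
      exact (mem_quant_suppBall.1 this).2.2
    obtain ⟨k, z, hk, hkn, -, rfl⟩ := B.exists_eq_quant_i_of_mem_M hx
    rw [B.i_truncExt_of_norm_le hn hu, B.factor n hn]
    linarith [norm_quant_sub_map_quant_le (B.i n) (B.i_i_of_le hk hkn z), B.norm_i_le n hn]
  · rw [B.leftInvOn_restr_cMap hn hu.1, cMap]
    linarith [norm_quant_map_quant_sub_le (B.i (n + 1)) (B.truncExt n u),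
      B.norm_i_le (n + 1) (by omega)]

lemma norm_sub_le_of_mem_D {n : ℕ} (hn : 1 ≤ n) {x y : Linf Γ} (hx : x ∈ B.D n)
    (hy : y ∈ B.D n) :
    ‖x - y‖ ≤ ((B.lam : ℝ) ^ 2 + 2 * B.lam + 2) * ‖restr (B.Γs n) x - restr (B.Γs n) y‖ := by
  set u := restr (B.Γs n) x
  set v := restr (B.Γs n) y
  by_cases huv : u = v
  · rw [B.injOn_restr_D hn hx hy huv, sub_self, norm_zero, huv, sub_self, norm_zero, mul_zero]
  have hint : ∀ w ∈ B.D n, IsIntValued (restr (B.Γs n) w) := fun w hw =>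
    (mem_quant_suppBall.1 (B.restr_image_D hn ▸ mem_image_of_mem _ hw)).1
  have hsep : 1 ≤ ‖u - v‖ := one_le_norm_sub (hint x hx) (hint y hy) huv
  set Gu := B.i (n + 1) (B.truncExt n u)
  set Gv := B.i (n + 1) (B.truncExt n v)
  calc ‖x - y‖ = ‖(x - Gu) + (Gu - Gv) - (y - Gv)‖ := by congr 1; abel
    _ ≤ ‖x - Gu‖ + ‖Gu - Gv‖ + ‖y - Gv‖ := norm_sub_le_of_le (norm_add_le _ _) le_rfl
    _ ≤ (B.lam + 1) + B.lam ^ 2 * ‖u - v‖ + (B.lam + 1) := by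
        gcongr
        exacts [B.norm_sub_i_truncExt_le hn hx, B.norm_i_truncExt_sub_le hn u v,
          B.norm_sub_i_truncExt_le hn hy]
    _ ≤ ((B.lam : ℝ) ^ 2 + 2 * B.lam + 2) * ‖u - v‖ := by nlinarith [B.one_le_lam_real]

end BD

/-- Lemma 6 (`Lipmain`): `r_n|_{D_n}` is injective,
`r_n(D_n) = r_n(M_{n+1}) = f(s_{n+1} B_{ℓ∞(Γ_n)})`, and the inverse map
is `(λ² + 2λ + 2)`-Lipschitz. -/
theorem restr_injOn_D (B : BD Γ) (n : ℕ) (hn : 1 ≤ n) :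
    Set.InjOn (restr (B.Γs n)) (B.D n) ∧
    restr (B.Γs n) '' B.D n = quant '' suppBall (B.Γs n) (B.s (n + 1)) ∧
    restr (B.Γs n) '' B.M (n + 1) = quant '' suppBall (B.Γs n) (B.s (n + 1)) ∧
    (∀ x ∈ B.D n, ∀ y ∈ B.D n,
      ‖x - y‖ ≤ ((B.lam : ℝ) ^ 2 + 2 * (B.lam : ℝ) + 2) *
        ‖restr (B.Γs n) x - restr (B.Γs n) y‖) :=
  ⟨B.injOn_restr_D hn, B.restr_image_D hn, B.restr_image_M_succ hn,
    fun _ hx _ hy => B.norm_sub_le_of_mem_D hn hx hy⟩
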